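/- arXiv:2307.01648 — 2 statements merged into one kernel-verified Lean document; each statement's English description precedes it below -/
import Mathlib

section
/- In the configuration graph G(P), for any word w, any symbol j ∈ Σ, and any fixed position ℓ with w[ℓ] ≠ j, the set of words {w} ∪ {w∘(ℓ, j') : j' a position of symbol j in w} forms a clique of size P[j]+1. -/
/-- The Parikh vector of a word `w : Fin n → Fin σ`. -/
def parikh {n σ : ℕ} (w : Fin n → Fin σ) : Fin σ → ℕ :=
  fun a => (Finset.univ.filter fun i => w i = a).card

/-- Words of length `n` over alphabet `Fin σ` with Parikh vector `P`. -/
abbrev Words (n σ : ℕ) (P : Fin σ → ℕ) := {w : Fin n → Fin σ // parikh w = P}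

/-- `u` is obtained from `w` by a single 2-swap. -/
def isSwap {n σ : ℕ} (w u : Fin n → Fin σ) : Prop :=
  ∃ i j : Fin n, i ≠ j ∧ w i ≠ w j ∧ u = w ∘ Equiv.swap i j

/-- The configuration graph `G(P)`. -/
def configGraph (n σ : ℕ) (P : Fin σ → ℕ) : SimpleGraph (Words n σ P) :=
  SimpleGraph.fromRel fun w u => isSwap w.1 u.1

lemma parikh_comp_perm {n σ : ℕ} (w : Fin n → Fin σ) (e : Equiv.Perm (Fin n)) :
    parikh (w ∘ e) = parikh w := by
  funext a
  unfold parikh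
  refine Finset.card_bij' (fun i _ => e i) (fun i _ => e.symm i) ?_ ?_ ?_ ?_ <;>
    simp [Function.comp]

lemma swap_comp {n σ : ℕ} (w : Fin n → Fin σ) (ℓ a b : Fin n) (ha : a ≠ ℓ) (hb : b ≠ ℓ)
    (hw : w a = w b) :
    (w ∘ Equiv.swap ℓ a) ∘ Equiv.swap a b = w ∘ Equiv.swap ℓ b := by
  funext x
  simp only [Function.comp, Equiv.swap_apply_def]
  split_ifs <;> simp_all

theorem stmt4 (n σ : ℕ) (P : Fin σ → ℕ) (w : Words n σ P) (j : Fin σ) (ℓ : Fin n)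
    (h : w.1 ℓ ≠ j) :
    (configGraph n σ P).IsClique
      {u | u = w ∨ ∃ j' : Fin n, w.1 j' = j ∧ u.1 = w.1 ∘ Equiv.swap ℓ j'} ∧
    ({u | u = w ∨ ∃ j' : Fin n, w.1 j' = j ∧ u.1 = w.1 ∘ Equiv.swap ℓ j'} :
        Set (Words n σ P)).ncard = P j + 1 := by
  set mk : Fin n → Words n σ P := fun j' =>
    ⟨w.1 ∘ Equiv.swap ℓ j', by rw [parikh_comp_perm]; exact w.2⟩ with hmk
  have hne_ℓ : ∀ j' : Fin n, w.1 j' = j → j' ≠ ℓ := by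
    intro j' hj' hℓ; exact h (hℓ ▸ hj')
  -- adjacency from w to mk j'
  have adj_w : ∀ j' : Fin n, w.1 j' = j → (configGraph n σ P).Adj w (mk j') := by
    intro j' hj'
    have hwne : w ≠ mk j' := by
      intro heq
      have : w.1 ℓ = (mk j').1 ℓ := by rw [heq]
      simp [hmk, Equiv.swap_apply_left] at this
      exact h (this ▸ hj')
    exact ⟨hwne, Or.inl ⟨ℓ, j', fun hc => (hne_ℓ j' hj') hc.symm,
      fun hc => h (hc ▸ hj' ▸ rfl), rfl⟩⟩
  have key1 : (configGraph n σ P).IsClique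
      {u | u = w ∨ ∃ j' : Fin n, w.1 j' = j ∧ u.1 = w.1 ∘ Equiv.swap ℓ j'} := by
    intro u hu v hv huv
    have hmem : ∀ x : Words n σ P,
        (x = w ∨ ∃ j' : Fin n, w.1 j' = j ∧ x.1 = w.1 ∘ Equiv.swap ℓ j') →
        x = w ∨ ∃ j' : Fin n, w.1 j' = j ∧ x = mk j' := by
      rintro x (rfl | ⟨j', hj', hx⟩)
      · exact Or.inl rfl
      · exact Or.inr ⟨j', hj', Subtype.ext hx⟩
    rcases hmem u hu with rfl | ⟨j₁, hj₁, rfl⟩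
    · rcases hmem v hv with rfl | ⟨j₂, hj₂, rfl⟩
      · exact absurd rfl huv
      · exact adj_w j₂ hj₂
    · rcases hmem v hv with rfl | ⟨j₂, hj₂, rfl⟩
      · exact (adj_w j₁ hj₁).symm
      · have hj12 : j₁ ≠ j₂ := by rintro rfl; exact huv rfl
        refine ⟨huv, Or.inl ⟨j₁, j₂, hj12, ?_, ?_⟩⟩
        · show (w.1 ∘ Equiv.swap ℓ j₁) j₁ ≠ (w.1 ∘ Equiv.swap ℓ j₁) j₂
          have h2 : Equiv.swap ℓ j₁ j₂ = j₂ :=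
            Equiv.swap_apply_of_ne_of_ne (hne_ℓ j₂ hj₂) hj12.symm
          simp only [Function.comp, Equiv.swap_apply_right, h2]
          rw [hj₂]; exact Ne.symm (fun hc => h hc.symm)
        · show (mk j₂).1 = (mk j₁).1 ∘ Equiv.swap j₁ j₂
          simp only [hmk]
          rw [swap_comp w.1 ℓ j₁ j₂ (hne_ℓ j₁ hj₁) (hne_ℓ j₂ hj₂) (hj₁.trans hj₂.symm)]
  refine ⟨key1, ?_⟩
  have hset : {u : Words n σ P | u = w ∨ ∃ j' : Fin n, w.1 j' = j ∧ u.1 = w.1 ∘ Equiv.swap ℓ j'}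
      = insert w (mk '' {j' : Fin n | w.1 j' = j}) := by
    ext u
    simp only [Set.mem_setOf_eq, Set.mem_insert_iff, Set.mem_image]
    constructor
    · rintro (rfl | ⟨j', hj', hu⟩)
      · exact Or.inl rfl
      · exact Or.inr ⟨j', hj', (Subtype.ext hu).symm⟩
    · rintro (rfl | ⟨j', hj', rfl⟩)
      · exact Or.inl rfl
      · exact Or.inr ⟨j', hj', rfl⟩
  rw [hset]
  have hwnotmem : w ∉ mk '' {j' : Fin n | w.1 j' = j} := by
    rintro ⟨j', hj', heq⟩
    have : (mk j').1 ℓ = w.1 ℓ := by rw [heq]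
    simp only [hmk, Function.comp, Equiv.swap_apply_left] at this
    exact h (this ▸ hj')
  have hinj : Set.InjOn mk {j' : Fin n | w.1 j' = j} := by
    intro a ha b hb hab
    by_contra hne
    have : (mk a).1 b = (mk b).1 b := by rw [hab]
    simp only [hmk, Function.comp, Equiv.swap_apply_right] at this
    rw [Equiv.swap_apply_of_ne_of_ne (hne_ℓ b hb) (Ne.symm hne)] at this
    exact h (this.symm.trans hb)
  rw [Set.ncard_insert_of_notMem hwnotmem, Set.ncard_image_of_injOn hinj]
  have : {j' : Fin n | w.1 j' = j} = ↑(Finset.univ.filter fun i => w.1 i = j) := by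
    ext x; simp
  rw [this, Set.ncard_coe_finset]
  have hP : (Finset.univ.filter fun i => w.1 i = j).card = P j := by
    simpa [parikh] using congrFun w.2 j
  rw [hP]
end

section
/- In the configuration graph G(P), if i₁ ≠ i₂ are two positions of symbol a in w and j₁ ≠ j₂ are two positions of a different symbol b in w, then the words w∘(i₁,j₁) and w∘(i₂,j₂) are at distance exactly 2 in G(P) (in particular they are not adjacent). -/
theorem stmt5 (n σ : ℕ) (P : Fin σ → ℕ) (w u₁ u₂ : Words n σ P)
    (i₁ i₂ j₁ j₂ : Fin n) (a b : Fin σ) (hab : a ≠ b)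
    (hi : i₁ ≠ i₂) (hj : j₁ ≠ j₂)
    (hwi₁ : w.1 i₁ = a) (hwi₂ : w.1 i₂ = a) (hwj₁ : w.1 j₁ = b) (hwj₂ : w.1 j₂ = b)
    (hu₁ : u₁.1 = w.1 ∘ Equiv.swap i₁ j₁) (hu₂ : u₂.1 = w.1 ∘ Equiv.swap i₂ j₂) :
    (configGraph n σ P).dist u₁ u₂ = 2 := by
  have hij11 : i₁ ≠ j₁ := fun h => hab (by rw [← hwi₁, h, hwj₁])
  have hij12 : i₁ ≠ j₂ := fun h => hab (by rw [← hwi₁, h, hwj₂])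
  have hij21 : i₂ ≠ j₁ := fun h => hab (by rw [← hwi₂, h, hwj₁])
  have hij22 : i₂ ≠ j₂ := fun h => hab (by rw [← hwi₂, h, hwj₂])
  -- values of u₁ and u₂ at the four points
  have e1i1 : u₁.1 i₁ = b := by rw [hu₁]; simp [hwj₁]
  have e1j1 : u₁.1 j₁ = a := by rw [hu₁]; simp [hwi₁]
  have e1i2 : u₁.1 i₂ = a := by
    rw [hu₁]; simp [Equiv.swap_apply_of_ne_of_ne hi.symm hij21, hwi₂]
  have e1j2 : u₁.1 j₂ = b := by
    rw [hu₁]; simp [Equiv.swap_apply_of_ne_of_ne (Ne.symm hij12) hj.symm, hwj₂]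
  have e2i2 : u₂.1 i₂ = b := by rw [hu₂]; simp [hwj₂]
  have e2j2 : u₂.1 j₂ = a := by rw [hu₂]; simp [hwi₂]
  have e2i1 : u₂.1 i₁ = a := by
    rw [hu₂]; simp [Equiv.swap_apply_of_ne_of_ne hi hij12, hwi₁]
  have e2j1 : u₂.1 j₁ = b := by
    rw [hu₂]; simp [Equiv.swap_apply_of_ne_of_ne (Ne.symm hij21) hj, hwj₁]
  -- u₂ is not obtained from u₁ by one swap
  have key : ∀ i j : Fin n, u₂.1 ≠ u₁.1 ∘ Equiv.swap i j := by
    intro i j h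
    have hx : ∀ x : Fin n, u₂.1 x ≠ u₁.1 x → x = i ∨ x = j := by
      intro x hne
      by_contra hc
      push_neg at hc
      apply hne
      rw [h]
      simp [Equiv.swap_apply_of_ne_of_ne hc.1 hc.2]
    have d1 : i₁ = i ∨ i₁ = j := hx i₁ (by rw [e2i1, e1i1]; exact hab)
    have d2 : j₁ = i ∨ j₁ = j := hx j₁ (by rw [e2j1, e1j1]; exact hab.symm)
    have d3 : i₂ = i ∨ i₂ = j := hx i₂ (by rw [e2i2, e1i2]; exact hab.symm)
    have d4 : j₂ = i ∨ j₂ = j := hx j₂ (by rw [e2j2, e1j2]; exact hab)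
    rcases d1 with h1 | h1 <;> rcases d2 with h2 | h2 <;> rcases d3 with h3 | h3 <;>
      rcases d4 with h4 | h4 <;>
      first
        | exact hij11 (h1.trans h2.symm)
        | exact hi (h1.trans h3.symm)
        | exact hij12 (h1.trans h4.symm)
        | exact hij21 (h3.trans h2.symm)
        | exact hj (h2.trans h4.symm)
        | exact hij22 (h3.trans h4.symm)
  -- adjacency facts
  have hne1 : u₁ ≠ w := by
    intro h
    have := congrArg (fun v : Words n σ P => v.1 i₁) h
    simp only [e1i1, hwi₁] at this
    exact hab this.symm
  have hne2 : w ≠ u₂ := by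
    intro h
    have := congrArg (fun v : Words n σ P => v.1 i₂) h
    simp only [e2i2, hwi₂] at this
    exact hab this
  have adj1 : (configGraph n σ P).Adj u₁ w := by
    rw [configGraph, SimpleGraph.fromRel_adj]
    refine ⟨hne1, Or.inr ⟨i₁, j₁, hij11, ?_, hu₁⟩⟩
    rw [hwi₁, hwj₁]; exact hab
  have adj2 : (configGraph n σ P).Adj w u₂ := by
    rw [configGraph, SimpleGraph.fromRel_adj]
    refine ⟨hne2, Or.inl ⟨i₂, j₂, hij22, ?_, hu₂⟩⟩
    rw [hwi₂, hwj₂]; exact hab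
  have p : (configGraph n σ P).Walk u₁ u₂ :=
    SimpleGraph.Walk.cons adj1 (SimpleGraph.Walk.cons adj2 SimpleGraph.Walk.nil)
  have hle : (configGraph n σ P).dist u₁ u₂ ≤ 2 :=
    SimpleGraph.dist_le
      (SimpleGraph.Walk.cons adj1 (SimpleGraph.Walk.cons adj2 SimpleGraph.Walk.nil))
  have hneq : u₁ ≠ u₂ := by
    intro h
    have := congrArg (fun v : Words n σ P => v.1 i₁) h
    simp only [e1i1, e2i1] at this
    exact hab this.symm
  have hnadj : ¬ (configGraph n σ P).Adj u₁ u₂ := by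
    rw [configGraph, SimpleGraph.fromRel_adj]
    rintro ⟨-, ⟨i, j, -, -, h⟩ | ⟨i, j, -, -, h⟩⟩
    · exact key i j h
    · apply key i j
      rw [h]
      funext x
      simp
  have h0 : (configGraph n σ P).dist u₁ u₂ ≠ 0 := by
    rw [SimpleGraph.dist_ne_zero_iff_ne_and_reachable]
    exact ⟨hneq, ⟨p⟩⟩
  have h1 : (configGraph n σ P).dist u₁ u₂ ≠ 1 := fun h =>
    hnadj (SimpleGraph.dist_eq_one_iff_adj.mp h)
  omega
end
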